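/- arXiv:1803.09019 — 2 statements merged into one kernel-verified Lean document; each statement's English description precedes it below -/
import Mathlib

section
/- Let W be a finite set of workers equipped with a total preorder ≼, let jobs arrive sequentially, and suppose each arriving job i has a feasible worker set Fᵢ ⊆ W that is upward closed with respect to ≼ (if w ∈ Fᵢ and w ≼ w' then w' ∈ Fᵢ). Consider the online greedy policy that assigns each arriving job to a ≼-minimal element of Fᵢ among the workers not yet assigned, and rejects the job if Fᵢ contains no unassigned worker. Then the matching produced by any run of this greedy policy has maximum cardinality among all matchings of jobs to workers in which each job i is matched only to workers in Fᵢ. -/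
/-!
Compare the greedy run `A` with an arbitrary feasible matching `B` prefix by prefix: for every
`r`-down-closed set `D` of workers, `A` has used at least as many workers of `D` as `B`. The only
delicate step is when `B` gives the current job a worker `w ∈ D` while `A` does not use `D`. Split
`D` at `w`. The part above `w` lies in the current feasible set, so greedy minimality (or the
rejection rule) shows that `A` has already used all of it. The part not above `w` is again
down-closed and untouched by `B`'s step. Taking `D` to be all workers gives the theorem.
-/

open Finset

section Greedy

open scoped Classical

variable {W : Type*} {m : ℕ}

noncomputable def assignedBefore (C : Fin m → Option W) (k : ℕ) : Finset W :=
  ({i : Fin m | i.val < k} : Finset (Fin m)).biUnion fun i => (C i).toFinset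

def IsDownClosed (r : W → W → Prop) (D : Set W) : Prop :=
  ∀ u ∈ D, ∀ u', r u' u → u' ∈ D

def IsGreedyRun (r : W → W → Prop) (F : Fin m → Set W) (A : Fin m → Option W) : Prop :=
  ∀ i : Fin m,
    (∀ w, A i = some w →
      w ∈ F i ∧ (∀ i' < i, A i' ≠ some w) ∧
        ∀ w', w' ∈ F i → (∀ i' < i, A i' ≠ some w') → r w w') ∧
    (A i = none → ∀ w ∈ F i, ∃ i' < i, A i' = some w)

section assignedBefore

variable (C : Fin m → Option W)

theorem mem_assignedBefore {k : ℕ} {w : W} :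
    w ∈ assignedBefore C k ↔ ∃ i : Fin m, i.val < k ∧ C i = some w := by
  simp [assignedBefore]

theorem assignedBefore_mono : Monotone (assignedBefore C) := by
  intro k l hkl w
  simp only [mem_assignedBefore]
  exact fun ⟨i, hik, hi⟩ => ⟨i, hik.trans_le hkl, hi⟩

theorem assignedBefore_succ {k : ℕ} (hk : k < m) :
    assignedBefore C (k + 1) = assignedBefore C k ∪ (C ⟨k, hk⟩).toFinset := by
  ext w
  simp only [mem_assignedBefore, mem_union, Option.mem_toFinset, Option.mem_def,
    Nat.lt_succ_iff_lt_or_eq, or_and_right, exists_or]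
  refine or_congr_right ⟨fun ⟨i, hik, hi⟩ => ?_, fun h => ⟨_, rfl, h⟩⟩
  obtain rfl : i = ⟨k, hk⟩ := Fin.ext hik
  exact hi

theorem filter_assignedBefore_succ_of_notMem {k : ℕ} (hk : k < m) {D : Set W}
    (hC : ∀ w, C ⟨k, hk⟩ = some w → w ∉ D) :
    {w ∈ assignedBefore C (k + 1) | w ∈ D} = {w ∈ assignedBefore C k | w ∈ D} := by
  rw [assignedBefore_succ C hk, filter_union, union_eq_left]
  intro w
  simp only [mem_filter, Option.mem_toFinset, Option.mem_def]
  exact fun ⟨hw, hwD⟩ => absurd hwD (hC w hw)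

theorem card_filter_assignedBefore_succ_le {k : ℕ} (hk : k < m) (D : Set W) :
    #{w ∈ assignedBefore C (k + 1) | w ∈ D} ≤ #{w ∈ assignedBefore C k | w ∈ D} + 1 := by
  rw [assignedBefore_succ C hk, filter_union]
  refine (card_union_le _ _).trans (Nat.add_le_add_left ?_ _)
  exact (card_filter_le _ _).trans (by cases C ⟨k, hk⟩ <;> simp)

theorem card_filter_assignedBefore_succ_of_fresh {k : ℕ} (hk : k < m) {D : Set W} {v : W}
    (hv : C ⟨k, hk⟩ = some v) (hvD : v ∈ D) (hfresh : v ∉ assignedBefore C k) :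
    #{w ∈ assignedBefore C (k + 1) | w ∈ D} = #{w ∈ assignedBefore C k | w ∈ D} + 1 := by
  rw [assignedBefore_succ C hk, hv, Option.toFinset_some, union_comm, ← insert_eq,
    filter_insert, if_pos hvD, card_insert_of_notMem fun h => hfresh (mem_filter.mp h).1]

theorem card_filter_ne_none_eq_sum {ι : Type*} [Fintype ι] (C : ι → Option W) :
    #{i | C i ≠ none} = ∑ i, #(C i).toFinset := by
  rw [card_filter]
  exact sum_congr rfl fun i _ => by cases C i <;> simp

theorem card_assignedBefore_le (k : ℕ) : #(assignedBefore C k) ≤ #{i | C i ≠ none} := by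
  rw [card_filter_ne_none_eq_sum]
  exact card_biUnion_le.trans (sum_le_sum_of_subset (subset_univ _))

theorem card_assignedBefore_eq (hC : ∀ i i' w, C i = some w → C i' = some w → i = i') :
    #(assignedBefore C m) = #{i | C i ≠ none} := by
  have hdisj :
      (↑(univ : Finset (Fin m)) : Set (Fin m)).PairwiseDisjoint fun i => (C i).toFinset := by
    intro i _ i' _ hii'
    simp only [Function.onFun, disjoint_left, Option.mem_toFinset, Option.mem_def]
    exact fun w hi hi' => hii' (hC i i' w hi hi')
  rw [card_filter_ne_none_eq_sum, ← card_biUnion hdisj, assignedBefore]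
  congr
  exact filter_true_of_mem fun i _ => i.isLt

end assignedBefore

section IsGreedyRun

variable {r : W → W → Prop} {F : Fin m → Set W} {A B : Fin m → Option W}

theorem IsGreedyRun.notMem_assignedBefore (hA : IsGreedyRun r F A) {j : Fin m} {v : W}
    (hv : A j = some v) : v ∉ assignedBefore A j := by
  rw [mem_assignedBefore]
  rintro ⟨i, hij, hi⟩
  exact ((hA j).1 v hv).2.1 i hij hi

theorem IsGreedyRun.mem_assignedBefore_of_isDownClosed (hA : IsGreedyRun r F A) {D : Set W}
    (hD : IsDownClosed r D) {j : Fin m} (hAj : ∀ v, A j = some v → v ∉ D) {u : W}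
    (huF : u ∈ F j) (huD : u ∈ D) : u ∈ assignedBefore A j := by
  rw [mem_assignedBefore]
  cases hAj' : A j with
  | none => exact (hA j).2 hAj' u huF
  | some v =>
    by_contra hfree
    push Not at hfree
    exact hAj v hAj' (hD u huD v (((hA j).1 v hAj').2.2 u huF hfree))

theorem IsGreedyRun.card_filter_assignedBefore_succ_le_of_notMem (hrefl : ∀ w, r w w)
    (htrans : ∀ a b c, r a b → r b c → r a c)
    (hup : ∀ i w w', w ∈ F i → r w w' → w' ∈ F i)
    (hA : IsGreedyRun r F A) (hB : ∀ i w, B i = some w → w ∈ F i) {k : ℕ} (hk : k < m)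
    (ih : ∀ D, IsDownClosed r D →
      #{u ∈ assignedBefore B k | u ∈ D} ≤ #{u ∈ assignedBefore A k | u ∈ D})
    {D : Set W} (hD : IsDownClosed r D) {w : W} (hw : B ⟨k, hk⟩ = some w)
    (hAk : ∀ v, A ⟨k, hk⟩ = some v → v ∉ D) :
    #{u ∈ assignedBefore B (k + 1) | u ∈ D} ≤ #{u ∈ assignedBefore A k | u ∈ D} := by
  -- `D'` is kept opaque so that `· ∈ D'` is decided classically, as in `ih`
  obtain ⟨D', hD'_def⟩ : ∃ D' : Set W, D' = {u | u ∈ D ∧ ¬ r w u} := ⟨_, rfl⟩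
  have hD' : IsDownClosed r D' := by
    rw [hD'_def]
    exact fun u ⟨huD, hwu⟩ u' hu'u =>
      ⟨hD u huD u' hu'u, fun hwu' => hwu (htrans _ _ _ hwu' hu'u)⟩
  have hsplit (s : Finset W) :
      #{u ∈ s | u ∈ D} = #{u ∈ s | u ∈ D ∧ r w u} + #{u ∈ s | u ∈ D'} := by
    rw [← card_filter_add_card_filter_not (s := {u ∈ s | u ∈ D}) (r w), filter_filter,
      filter_filter, hD'_def]
    simp
  have habove : {u ∈ assignedBefore B (k + 1) | u ∈ D ∧ r w u} ⊆
      {u ∈ assignedBefore A k | u ∈ D ∧ r w u} := by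
    intro u hu
    simp only [mem_filter] at hu ⊢
    exact ⟨hA.mem_assignedBefore_of_isDownClosed hD hAk (hup _ w u (hB _ w hw) hu.2.2) hu.2.1,
      hu.2⟩
  have hbelow :
      {u ∈ assignedBefore B (k + 1) | u ∈ D'} = {u ∈ assignedBefore B k | u ∈ D'} :=
    filter_assignedBefore_succ_of_notMem B hk (D := D') fun u hu huD' => by
      obtain rfl := Option.some_injective _ (hw.symm.trans hu)
      exact (hD'_def ▸ huD').2 (hrefl w)
  rw [hsplit, hsplit, hbelow]
  exact add_le_add (card_le_card habove) (ih D' hD')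

theorem IsGreedyRun.card_filter_assignedBefore_le (hrefl : ∀ w, r w w)
    (htrans : ∀ a b c, r a b → r b c → r a c)
    (hup : ∀ i w w', w ∈ F i → r w w' → w' ∈ F i)
    (hA : IsGreedyRun r F A) (hB : ∀ i w, B i = some w → w ∈ F i) {k : ℕ} (hk : k ≤ m)
    {D : Set W} (hD : IsDownClosed r D) :
    #{w ∈ assignedBefore B k | w ∈ D} ≤ #{w ∈ assignedBefore A k | w ∈ D} := by
  induction k generalizing D with
  | zero => simp [assignedBefore]
  | succ k ih =>
    have hk : k < m := hk
    replace ih (D : Set W) (hD : IsDownClosed r D) :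
        #{w ∈ assignedBefore B k | w ∈ D} ≤ #{w ∈ assignedBefore A k | w ∈ D} :=
      ih hk.le hD
    have hA_mono :
        #{w ∈ assignedBefore A k | w ∈ D} ≤ #{w ∈ assignedBefore A (k + 1) | w ∈ D} :=
      card_le_card (filter_subset_filter _ (assignedBefore_mono A k.le_succ))
    by_cases hAk : ∃ v ∈ D, A ⟨k, hk⟩ = some v
    · obtain ⟨v, hvD, hv⟩ := hAk
      calc #{w ∈ assignedBefore B (k + 1) | w ∈ D}
          _ ≤ #{w ∈ assignedBefore B k | w ∈ D} + 1 :=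
            card_filter_assignedBefore_succ_le B hk D
          _ ≤ #{w ∈ assignedBefore A k | w ∈ D} + 1 := Nat.add_le_add_right (ih D hD) 1
          _ = #{w ∈ assignedBefore A (k + 1) | w ∈ D} :=
            (card_filter_assignedBefore_succ_of_fresh A hk hv hvD
              (hA.notMem_assignedBefore (j := ⟨k, hk⟩) hv)).symm
    · have hAk (v) (hv : A ⟨k, hk⟩ = some v) : v ∉ D := fun hvD => hAk ⟨v, hvD, hv⟩
      refine le_trans ?_ hA_mono
      cases hBk : B ⟨k, hk⟩ with
      | none =>
        rw [filter_assignedBefore_succ_of_notMem B hk (by simp [hBk])]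
        exact ih D hD
      | some w =>
        exact hA.card_filter_assignedBefore_succ_le_of_notMem hrefl htrans hup hB hk ih hD hBk hAk

end IsGreedyRun

end Greedy

theorem greedy_max_matching_total_preorder_general
    {W : Type*} {m : ℕ}
    (r : W → W → Prop)
    (hrefl : ∀ w, r w w)
    (htrans : ∀ a b c, r a b → r b c → r a c)
    (F : Fin m → Set W)
    -- each feasible set is upward closed with respect to `r`:
    (hup : ∀ i w w', w ∈ F i → r w w' → w' ∈ F i)
    (A : Fin m → Option W)
    -- `A` is a run of the greedy policy:
    (hA : ∀ i : Fin m,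
      (∀ w, A i = some w →
        w ∈ F i ∧ (∀ i' < i, A i' ≠ some w) ∧
          ∀ w', w' ∈ F i → (∀ i' < i, A i' ≠ some w') → r w w') ∧
      (A i = none → ∀ w ∈ F i, ∃ i' < i, A i' = some w)) :
    -- the greedy matching has maximum cardinality among all feasible matchings:
    ∀ B : Fin m → Option W,
      (∀ i i' w, B i = some w → B i' = some w → i = i') →
      (∀ i w, B i = some w → w ∈ F i) →
      (Finset.univ.filter (fun i => B i ≠ none)).card ≤
        (Finset.univ.filter (fun i => A i ≠ none)).card := by
  intro B hBinj hB
  have hcmp := IsGreedyRun.card_filter_assignedBefore_le hrefl htrans hup hA hB le_rfl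
    (D := Set.univ) fun _ _ _ _ => trivial
  simp only [Set.mem_univ, filter_true] at hcmp
  calc #{i | B i ≠ none}
      _ = #(assignedBefore B m) := (card_assignedBefore_eq B hBinj).symm
      _ ≤ #(assignedBefore A m) := hcmp
      _ ≤ #{i | A i ≠ none} := card_assignedBefore_le A m

theorem greedy_max_matching_total_preorder
    {W : Type*} [Fintype W] [DecidableEq W] {m : ℕ}
    (r : W → W → Prop)
    (hrefl : ∀ w, r w w)
    (htrans : ∀ a b c, r a b → r b c → r a c)
    (htotal : ∀ a b, r a b ∨ r b a)
    (F : Fin m → Set W)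
    -- each feasible set is upward closed with respect to `r`:
    (hup : ∀ i w w', w ∈ F i → r w w' → w' ∈ F i)
    (A : Fin m → Option W)
    -- `A` is a run of the greedy policy:
    (hA : ∀ i : Fin m,
      (∀ w, A i = some w →
        w ∈ F i ∧ (∀ i' < i, A i' ≠ some w) ∧
          ∀ w', w' ∈ F i → (∀ i' < i, A i' ≠ some w') → r w w') ∧
      (A i = none → ∀ w ∈ F i, ∃ i' < i, A i' = some w)) :
    -- the greedy matching has maximum cardinality among all feasible matchings:
    ∀ B : Fin m → Option W,
      (∀ i i' w, B i = some w → B i' = some w → i = i') →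
      (∀ i w, B i = some w → w ∈ F i) →
      (Finset.univ.filter (fun i => B i ≠ none)).card ≤
        (Finset.univ.filter (fun i => A i ≠ none)).card :=
  greedy_max_matching_total_preorder_general r hrefl htrans F hup A hA
end

section
/- Let Ω ⊆ [0, ∞) be the domain of job values, let x₁, ..., xₙ ∈ Ω be job values, p₁, ..., pₙ worker performance rates, α ∈ ℝ a threshold, and f a threshold function. For each worker i, assume the set {x ∈ Ω : f(x, pᵢ) ≥ α} is nonempty and admits a maximum uᵢ and a minimum vᵢ. Define the job load l(X) = sqrt(x₁² + ... + xₙ²), and similarly l(M) = sqrt(u₁² + ... + uₙ²) and l(N) = sqrt(v₁² + ... + vₙ²). If the reward satisfies r(X) = n, then l(N) ≤ l(X) ≤ l(M). -/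
/-!
STATEMENT 5 (performance analysis theorem): for nonnegative job values, if the reward
equals `n` (all jobs can be assigned meeting the threshold, witnessed by a bijection
`σ`), then the job load `l(X) = sqrt(x₁² + ⋯ + xₙ²)` satisfies
`l(N) ≤ l(X) ≤ l(M)`, where `M = {u₁, …, uₙ}` and `N = {v₁, …, vₙ}` collect the
maximal and minimal job values each worker can serve.
-/

theorem sstap_job_load_bounds {n : ℕ}
    (Ω : Set ℝ) (hΩ : Ω ⊆ Set.Ici (0 : ℝ))
    (x p u v : Fin n → ℝ) (f : ℝ → ℝ → ℝ) (α : ℝ)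
    (hx : ∀ j, x j ∈ Ω)
    -- `u i` is the maximum of `{x ∈ Ω : f x (p i) ≥ α}` (in particular this set is nonempty):
    (hu : ∀ i, IsGreatest {y ∈ Ω | α ≤ f y (p i)} (u i))
    -- `v i` is the minimum of `{x ∈ Ω : f x (p i) ≥ α}`:
    (hv : ∀ i, IsLeast {y ∈ Ω | α ≤ f y (p i)} (v i))
    -- the reward is `n`: all jobs can be assigned, meeting every threshold constraint:
    (hreward : ∃ σ : Equiv.Perm (Fin n), ∀ j, α ≤ f (x j) (p (σ j))) :
    Real.sqrt (∑ i, v i ^ 2) ≤ Real.sqrt (∑ i, x i ^ 2) ∧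
      Real.sqrt (∑ i, x i ^ 2) ≤ Real.sqrt (∑ i, u i ^ 2) := by
  obtain ⟨σ, hσ⟩ := hreward
  have hmem : ∀ j, x j ∈ {y ∈ Ω | α ≤ f y (p (σ j))} := fun j => ⟨hx j, hσ j⟩
  have hvx : ∀ j, v (σ j) ≤ x j := fun j => (hv (σ j)).2 (hmem j)
  have hxu : ∀ j, x j ≤ u (σ j) := fun j => (hu (σ j)).2 (hmem j)
  have hv0 : ∀ i, 0 ≤ v i := fun i => hΩ (hv i).1.1
  have hx0 : ∀ j, 0 ≤ x j := fun j => hΩ (hx j)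
  constructor
  · apply Real.sqrt_le_sqrt
    calc ∑ i, v i ^ 2 = ∑ j, v (σ j) ^ 2 := (Equiv.sum_comp σ (fun i => v i ^ 2)).symm
      _ ≤ ∑ j, x j ^ 2 := Finset.sum_le_sum fun j _ => pow_le_pow_left₀ (hv0 _) (hvx j) 2
  · apply Real.sqrt_le_sqrt
    calc ∑ j, x j ^ 2 ≤ ∑ j, u (σ j) ^ 2 :=
        Finset.sum_le_sum fun j _ => pow_le_pow_left₀ (hx0 j) (hxu j) 2
      _ = ∑ i, u i ^ 2 := Equiv.sum_comp σ (fun i => u i ^ 2)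
end
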